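/- Let G be a finite simple graph with vertex set V(G) = {v_1, …, v_n} and let 1 < k < n. Suppose that: (1) N[v_1] ∪ … ∪ N[v_k] = V(G); (2) N[v_1] ∩ (N[v_2] ∪ … ∪ N[v_k]) = ∅; (3) |d(v_i) − d(v_j)| ≠ 1 for every i ∈ {1,…,k} and every j ∈ {1,…,n} with j ≠ i; (4) v_1 is the unique vertex of G of degree d(v_1); (5) for every i ∈ {2,…,k}, every vertex of G having degree d(v_i) lies in {v_2,…,v_k}. Let G' be a finite simple graph with vertex set V(G') = {v'_1, …, v'_n} such that for every j ∈ {1,…,n} the vertex-deleted subgraph G − v_j is isomorphic to G' − v'_j. Then N[v'_1] ∩ (N[v'_2] ∪ … ∪ N[v'_k]) = ∅, where the closed neighborhoods are taken in G'. -/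

import Mathlib

/-!
Since `n ≥ 3`, Kelly's edge count shows that `G` and `G'` have the same degrees. In `G - u` the
degree of a vertex drops by one exactly when it is adjacent to `u`, so an isomorphism
`G - x ≅ G' - x` sends each vertex to one whose degree differs by at most one. By (3) the degree is
then preserved, so by (4) and (5) the isomorphism fixes `v_1` and maps `{v_2, …, v_k}` onto
itself, and adjacency to `x` is preserved along the way. Hence a common vertex of `N[v'_1]` and
`N[v'_i]`, `i ≥ 2`, would lie in `N[v_1]` and be adjacent in `G` to some `v_j`, `j ≥ 2`,
contradicting (2).
-/

open Finset

namespace SimpleGraph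

variable {V : Type*} [Fintype V] [DecidableEq V] {G G' : SimpleGraph V}
  [DecidableRel G.Adj] [DecidableRel G'.Adj]

theorem degree_induce_compl_singleton_add (u : V) (y : ({u}ᶜ : Set V)) :
    (G.induce {u}ᶜ).degree y + (if G.Adj u y then 1 else 0) = G.degree y := by
  have h : (G.induce {u}ᶜ).degree y = #((G.neighborFinset y).erase u) := by
    rw [← card_neighborFinset_eq_degree]
    refine card_nbij (↑) (fun z hz => ?_) Subtype.val_injective.injOn fun z hz => ?_
    · rw [mem_coe, mem_erase, mem_neighborFinset]
      exact ⟨z.2, by simpa using hz⟩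
    · rw [mem_coe, mem_erase, mem_neighborFinset] at hz
      exact ⟨⟨z, hz.1⟩, by simpa using hz.2, rfl⟩
  rw [h, ← card_neighborFinset_eq_degree]
  split_ifs with hu
  · exact card_erase_add_one ((mem_neighborFinset _ _ _).2 hu.symm)
  · rw [erase_eq_of_notMem fun h => hu ((mem_neighborFinset _ _ _).1 h).symm, add_zero]

theorem degree_eq_of_nonempty_iso_induce_compl_singleton (hV : 3 ≤ Fintype.card V)
    (hdel : ∀ v, Nonempty (G.induce {v}ᶜ ≃g G'.induce {v}ᶜ)) (v : V) :
    G'.degree v = G.degree v := by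
  have hdiff : ∀ v, #G.edgeFinset - G.degree v = #G'.edgeFinset - G'.degree v := fun v => by
    obtain ⟨φ⟩ := hdel v
    rw [← card_edgeFinset_deleteIncidenceSet, ← card_edgeFinset_deleteIncidenceSet,
      ← card_edgeFinset_induce_compl_singleton, ← card_edgeFinset_induce_compl_singleton,
      φ.card_edgeFinset_eq]
  have hsum : ∀ H : SimpleGraph V, ∀ [DecidableRel H.Adj],
      ∑ v, ((#H.edgeFinset - H.degree v : ℕ) : ℤ) = (Fintype.card V - 2) * #H.edgeFinset := by
    intro H _
    simp only [Nat.cast_sub (H.degree_le_card_edgeFinset _), sum_sub_distrib, sum_const,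
      card_univ, nsmul_eq_mul, ← Nat.cast_sum, sum_degrees_eq_twice_card_edges]
    push_cast; ring
  have hE : #G.edgeFinset = #G'.edgeFinset := by
    have := hsum G
    rw [Fintype.sum_congr _ _ fun v => congrArg ((↑) : ℕ → ℤ) (hdiff v), hsum G'] at this
    have hpos : (0 : ℤ) < Fintype.card V - 2 := by omega
    exact_mod_cast (mul_left_cancel₀ hpos.ne' this).symm
  have := hdiff v
  have := G.degree_le_card_edgeFinset v
  have := G'.degree_le_card_edgeFinset v
  omega

theorem degree_eq_and_adj_iff_of_iso_induce_compl_singleton {u : V}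
    (φ : G.induce {u}ᶜ ≃g G'.induce {u}ᶜ) (hdeg : ∀ v, G'.degree v = G.degree v)
    (y : ({u}ᶜ : Set V)) (hy : |(G.degree y : ℤ) - G.degree (φ y : V)| ≠ 1) :
    G.degree (φ y : V) = G.degree y ∧ (G.Adj u y ↔ G'.Adj u (φ y)) := by
  have hG := G.degree_induce_compl_singleton_add u y
  have hG' := G'.degree_induce_compl_singleton_add u (φ y)
  rw [φ.degree_eq, hdeg] at hG'
  rw [Ne, abs_eq zero_le_one] at hy
  constructor <;> split_ifs at hG hG' <;> simp_all <;> omega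

theorem exists_adj_mem_of_adj_of_iso_induce_compl_singleton
    (hdel : ∀ v, Nonempty (G.induce {v}ᶜ ≃g G'.induce {v}ᶜ))
    (hdeg : ∀ v, G'.degree v = G.degree v) {S : Set V} {s x : V} (hs : s ∈ S)
    (hrigid : ∀ w ≠ s, |(G.degree s : ℤ) - G.degree w| ≠ 1)
    (hclosed : ∀ w, G.degree w = G.degree s → w ∈ S) (hxs : G'.Adj x s) :
    ∃ z ∈ S, G.Adj x z := by
  obtain ⟨φ⟩ := hdel x
  obtain ⟨z, hφz⟩ := φ.surjective ⟨s, hxs.ne.symm⟩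
  replace hφz : (φ z : V) = s := congrArg Subtype.val hφz
  have hz : |(G.degree z : ℤ) - G.degree (φ z : V)| ≠ 1 := by
    rw [hφz, abs_sub_comm]
    obtain rfl | hzs := eq_or_ne (z : V) s
    · simp
    · exact hrigid z hzs
  obtain ⟨hdz, hadj⟩ := degree_eq_and_adj_iff_of_iso_induce_compl_singleton φ hdeg z hz
  rw [hφz] at hdz hadj
  exact ⟨z, hclosed z hdz.symm, hadj.2 hxs⟩

end SimpleGraph

open SimpleGraph

/-- Lemma 1 of Hosaka's paper: under hypotheses (1)–(5) and the isomorphisms of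
vertex-deleted subgraphs, `N[v'_1] ∩ (N[v'_2] ∪ … ∪ N[v'_k]) = ∅` in `G'`.
Vertices are indexed by `Fin n`, with `v_j` (resp. `v'_j`) corresponding to
index `⟨j-1, _⟩`. -/
theorem stmt_2 (n k : ℕ) (hk1 : 1 < k) (hkn : k < n)
    (G G' : SimpleGraph (Fin n)) [DecidableRel G.Adj] [DecidableRel G'.Adj]
    -- (2) N[v_1] ∩ (N[v_2] ∪ … ∪ N[v_k]) = ∅
    (h2 : insert (⟨0, by omega⟩ : Fin n) (G.neighborSet ⟨0, by omega⟩) ∩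
        (⋃ i ∈ {i : Fin n | 0 < (i : ℕ) ∧ (i : ℕ) < k},
          insert i (G.neighborSet i)) = ∅)
    -- (3) |d(v_i) − d(v_j)| ≠ 1 for i ∈ {1,…,k}, j ≠ i
    (h3 : ∀ i j : Fin n, (i : ℕ) < k → j ≠ i →
        |(G.degree i : ℤ) - (G.degree j : ℤ)| ≠ 1)
    -- (4) v_1 is the unique vertex of degree d(v_1)
    (h4 : ∀ w : Fin n, G.degree w = G.degree ⟨0, by omega⟩ → w = ⟨0, by omega⟩)
    -- (5) every vertex of degree d(v_i), i ∈ {2,…,k}, lies in {v_2,…,v_k}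
    (h5 : ∀ i : Fin n, 0 < (i : ℕ) → (i : ℕ) < k →
        ∀ w : Fin n, G.degree w = G.degree i → 0 < (w : ℕ) ∧ (w : ℕ) < k)
    -- G − v_j ≅ G' − v'_j for every j
    (hdel : ∀ j : Fin n,
        Nonempty (G.induce ({j}ᶜ : Set (Fin n)) ≃g G'.induce ({j}ᶜ : Set (Fin n)))) :
    insert (⟨0, by omega⟩ : Fin n) (G'.neighborSet ⟨0, by omega⟩) ∩
        (⋃ i ∈ {i : Fin n | 0 < (i : ℕ) ∧ (i : ℕ) < k},
          insert i (G'.neighborSet i)) = ∅ := by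
  set v₀ : Fin n := ⟨0, by omega⟩
  have hdeg := degree_eq_of_nonempty_iso_induce_compl_singleton (by simp; omega) hdel
  have hv₀ : ∀ x, G'.Adj x v₀ → G.Adj x v₀ := fun x hx => by
    obtain ⟨z, rfl, hz⟩ := exists_adj_mem_of_adj_of_iso_induce_compl_singleton (S := {v₀})
      hdel hdeg rfl (h3 v₀ · (by simp [v₀]; omega)) h4 hx
    exact hz
  have hS : ∀ x s : Fin n, 0 < (s : ℕ) ∧ (s : ℕ) < k → G'.Adj x s →
      ∃ z : Fin n, (0 < (z : ℕ) ∧ (z : ℕ) < k) ∧ G.Adj x z := fun x s hs =>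
    exists_adj_mem_of_adj_of_iso_induce_compl_singleton (S := {i | 0 < (i : ℕ) ∧ (i : ℕ) < k})
      hdel hdeg hs (h3 s · hs.2) (h5 s hs.1 hs.2)
  simp only [Set.eq_empty_iff_forall_notMem, Set.mem_inter_iff, Set.mem_insert_iff,
    mem_neighborSet, Set.mem_iUnion, Set.mem_ofPred_eq, exists_prop, not_and] at h2 ⊢
  rintro x hx₀ ⟨s, hs, hxs⟩
  have hx₀G : x = v₀ ∨ G.Adj v₀ x := hx₀.imp_right fun h => (hv₀ x h.symm).symm
  have hxs' : G'.Adj x s := by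
    rcases hxs with rfl | h
    · exact absurd ⟨x, hs, Or.inl rfl⟩ (h2 x hx₀G)
    · exact h.symm
  obtain ⟨z, hz, hxz⟩ := hS x s hs hxs'
  exact h2 x hx₀G ⟨z, hz, Or.inr hxz.symm⟩
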